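/- arXiv:2410.09973 — 2 statements merged into one kernel-verified Lean document; each statement's English description precedes it below -/
import Mathlib

section
/- Let f : ℝ^N → ℝ be differentiable, let x₀, …, x_n ∈ ℝ^N, let φ(x) = Ux be a linear isometry of ℝ^N (U an orthogonal matrix), and define g := f ∘ φ and y_k := φ⁻¹(x_k) for k = 0, …, n. Then the information vectors coincide exactly: (f(x_k) : k ≤ n) ∪ (⟨v,w⟩ : v,w ∈ (x₀) ∪ (∇f(x_k) : k ≤ n)) = (g(y_k) : k ≤ n) ∪ (⟨v,w⟩ : v,w ∈ (y₀) ∪ (∇g(y_k) : k ≤ n)). If φ is a general isometry of the form φ(x) = Ux + b, then the reduced information vectors still coincide: (f(x_k), ⟨∇f(x_k), ∇f(x_l)⟩ : k, l ≤ n) = (g(y_k), ⟨∇g(y_k), ∇g(y_l)⟩ : k, l ≤ n). -/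
open MeasureTheory ProbabilityTheory Filter
open scoped ENNReal NNReal InnerProductSpace Topology BigOperators

noncomputable section

/-- Euclidean space `ℝ^N`. -/
abbrev EucSp (N : ℕ) : Type := EuclideanSpace ℝ (Fin N)

/-- Convergence in probability (along the dimension index `N → ∞`)
of real random variables to a deterministic constant. -/
def TendstoInProb {Ω : Type*} [MeasurableSpace Ω] (P : Measure Ω)
    (Z : ℕ → Ω → ℝ) (c : ℝ) : Prop :=
  ∀ ε : ℝ, 0 < ε → Tendsto (fun N => P {ω | ε < |Z N ω - c|}) atTop (𝓝 0)

/-- The mean function of a random function. -/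
def meanRF {Ω : Type*} [MeasurableSpace Ω] (P : Measure Ω) {N : ℕ}
    (f : Ω → EucSp N → ℝ) (x : EucSp N) : ℝ :=
  ∫ ω, f ω x ∂P

/-- The covariance function of a random function. -/
def covRF {Ω : Type*} [MeasurableSpace Ω] (P : Measure Ω) {N : ℕ}
    (f : Ω → EucSp N → ℝ) (x y : EucSp N) : ℝ :=
  ∫ ω, (f ω x - meanRF P f x) * (f ω y - meanRF P f y) ∂P

/-- Covariance of two real random variables. -/
def covRV {Ω : Type*} [MeasurableSpace Ω] (P : Measure Ω) (g h : Ω → ℝ) : ℝ :=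
  ∫ ω, (g ω - ∫ ω', g ω' ∂P) * (h ω - ∫ ω', h ω' ∂P) ∂P

/-- A Gaussian random function: every finite linear combination of evaluations
has a (possibly degenerate) Gaussian distribution. -/
def IsGaussianRF {Ω : Type*} [MeasurableSpace Ω] (P : Measure Ω) {N : ℕ}
    (f : Ω → EucSp N → ℝ) : Prop :=
  ∀ (n : ℕ) (x : Fin n → EucSp N) (c : Fin n → ℝ), ∃ (m : ℝ) (v : ℝ≥0),
    Measure.map (fun ω => ∑ i, c i * f ω (x i)) P = gaussianReal m v

/-- A (non-stationary) isotropic scaled random function: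
mean `μ(‖x‖²/2)` and covariance `(1/N)·κ(‖x‖²/2, ‖y‖²/2, ⟨x,y⟩)`. -/
def IsIsotropicRF {Ω : Type*} [MeasurableSpace Ω] (P : Measure Ω) {N : ℕ}
    (f : Ω → EucSp N → ℝ) (μ : ℝ → ℝ) (κ : ℝ → ℝ → ℝ → ℝ) : Prop :=
  (∀ x, meanRF P f x = μ (‖x‖ ^ 2 / 2)) ∧
  (∀ x y, covRF P f x y = (1 / (N : ℝ)) * κ (‖x‖ ^ 2 / 2) (‖y‖ ^ 2 / 2) ⟪x, y⟫_ℝ)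

/-- A stationary isotropic scaled random function:
constant mean `μ` and covariance `(1/N)·C(‖x−y‖²/2)`. -/
def IsStationaryIsotropicRF {Ω : Type*} [MeasurableSpace Ω] (P : Measure Ω) {N : ℕ}
    (f : Ω → EucSp N → ℝ) (μ : ℝ) (C : ℝ → ℝ) : Prop :=
  (∀ x, meanRF P f x = μ) ∧
  (∀ x y, covRF P f x y = (1 / (N : ℝ)) * C (‖x - y‖ ^ 2 / 2))

/-- A (non-stationary) isotropic kernel is valid in all dimensions if a corresponding
(non-stationary) isotropic Gaussian random function exists in every dimension. -/
def ValidInAllDimensions (μ : ℝ → ℝ) (κ : ℝ → ℝ → ℝ → ℝ) : Prop :=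
  ∀ N : ℕ, ∃ (Ω' : Type) (_ : MeasurableSpace Ω') (P : Measure Ω') (f : Ω' → EucSp N → ℝ),
    IsProbabilityMeasure P ∧ IsGaussianRF P f ∧ IsIsotropicRF P f μ κ

/-- A stationary isotropic kernel is valid in all dimensions if a corresponding
stationary isotropic Gaussian random function exists in every dimension. -/
def ValidInAllDimensionsStat (μ : ℝ) (C : ℝ → ℝ) : Prop :=
  ∀ N : ℕ, ∃ (Ω' : Type) (_ : MeasurableSpace Ω') (P : Measure Ω') (f : Ω' → EucSp N → ℝ),
    IsProbabilityMeasure P ∧ IsGaussianRF P f ∧ IsStationaryIsotropicRF P f μ C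

/-- Sufficient smoothness of a (non-stationary) isotropic kernel: the partial
derivatives `κ₁₂, κ₁₃, κ₂₃, κ₃₃` exist and are continuous. -/
def KernelSufficientlySmooth (κ : ℝ → ℝ → ℝ → ℝ) : Prop :=
  ∃ κ₁ κ₂ κ₃ κ₁₂ κ₁₃ κ₂₃ κ₃₃ : ℝ → ℝ → ℝ → ℝ,
    (∀ a b c, HasDerivAt (fun t => κ t b c) (κ₁ a b c) a) ∧
    (∀ a b c, HasDerivAt (fun t => κ a t c) (κ₂ a b c) b) ∧
    (∀ a b c, HasDerivAt (fun t => κ a b t) (κ₃ a b c) c) ∧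
    (∀ a b c, HasDerivAt (fun t => κ₁ a t c) (κ₁₂ a b c) b) ∧
    (∀ a b c, HasDerivAt (fun t => κ₁ a b t) (κ₁₃ a b c) c) ∧
    (∀ a b c, HasDerivAt (fun t => κ₂ a b t) (κ₂₃ a b c) c) ∧
    (∀ a b c, HasDerivAt (fun t => κ₃ a b t) (κ₃₃ a b c) c) ∧
    Continuous (fun p : ℝ × ℝ × ℝ => κ₁₂ p.1 p.2.1 p.2.2) ∧
    Continuous (fun p : ℝ × ℝ × ℝ => κ₁₃ p.1 p.2.1 p.2.2) ∧
    Continuous (fun p : ℝ × ℝ × ℝ => κ₂₃ p.1 p.2.1 p.2.2) ∧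
    Continuous (fun p : ℝ × ℝ × ℝ => κ₃₃ p.1 p.2.1 p.2.2)

/-- Sufficient smoothness of the mean: a continuous derivative exists. -/
def MeanSufficientlySmooth (μ : ℝ → ℝ) : Prop :=
  ∃ μ' : ℝ → ℝ, (∀ a, HasDerivAt μ (μ' a) a) ∧ Continuous μ'

/-- Strict positive definiteness of the pair `(f, ∇f)`: any vanishing variance of a
finite linear combination of values and gradient entries at distinct points forces
all coefficients to vanish. -/
def StrictPosDefPair {Ω : Type*} [MeasurableSpace Ω] (P : Measure Ω) {N : ℕ}
    (f : Ω → EucSp N → ℝ) : Prop :=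
  ∀ (n : ℕ) (x : Fin n → EucSp N), Function.Injective x →
    ∀ (w : Fin n → ℝ) (u : Fin n → EucSp N),
      variance (fun ω => ∑ i, (w i * f ω (x i) + ⟪u i, gradient (f ω) (x i)⟫_ℝ)) P = 0 →
      ∀ i, w i = 0 ∧ u i = 0

/-- The dimensionless information: values of the function along the path together with
all inner products of `x₀` and the encountered gradients. -/
abbrev InfoVec : Type := (ℕ → ℝ) × (ℕ → ℕ → ℝ)

/-- A general gradient span algorithm, given by its prefactors, which are functions
of the dimensionless information. -/
structure GSA where
  hx : ℕ → InfoVec → ℝ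
  hg : ℕ → ℕ → InfoVec → ℝ

/-- The information vector `I_n` available at time `n`: function values `f(x_k)`, `k ≤ n`,
and all inner products of the vectors `x₀, ∇f(x₀), …, ∇f(x_n)` (encoded with index `0`
for `x₀` and index `k+1` for `∇f(x_k)`; entries beyond the horizon are set to `0`). -/
def information {N : ℕ} (f : EucSp N → ℝ) (x : ℕ → EucSp N) (n : ℕ) : InfoVec :=
  (fun k => if k ≤ n then f (x k) else 0,
   fun i j =>
     (let v : ℕ → EucSp N := fun i =>
        if i = 0 then x 0 else if i - 1 ≤ n then gradient f (x (i - 1)) else 0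
      ⟪v i, v j⟫_ℝ))

/-- The reduced information vector `I_n^{∖x₀}`: function values and inner products of
gradients only. -/
def redInformation {N : ℕ} (f : EucSp N → ℝ) (x : ℕ → EucSp N) (n : ℕ) : InfoVec :=
  (fun k => if k ≤ n then f (x k) else 0,
   fun k l => if k ≤ n ∧ l ≤ n then ⟪gradient f (x k), gradient f (x l)⟫_ℝ else 0)

/-- `x` is the path produced by the gradient span algorithm `G` applied to `f` with
starting point `x₀`:  `x_{n+1} = h^{(x)}_{n+1}(I_n)·x₀ + ∑_{k ≤ n} h^{(g)}_{n+1,k}(I_n)·∇f(x_k)`. -/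
def GSA.IsPath {N : ℕ} (G : GSA) (f : EucSp N → ℝ) (x0 : EucSp N) (x : ℕ → EucSp N) : Prop :=
  x 0 = x0 ∧
  ∀ n : ℕ, x (n + 1) =
    G.hx (n + 1) (information f x n) • x0 +
      ∑ k ∈ Finset.range (n + 1), G.hg (n + 1) k (information f x n) • gradient f (x k)

/-- `G` is `x₀`-agnostic: it stays in the span shifted by `x₀` (`h^{(x)} = 1`) and its
prefactors depend only on the reduced information (no inner products with `x₀`). -/
def GSA.X0Agnostic (G : GSA) : Prop :=
  (∀ n ι, G.hx n ι = 1) ∧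
  (∀ n k (ι ι' : InfoVec), ι.1 = ι'.1 →
    (∀ i j : ℕ, ι.2 (i + 1) (j + 1) = ι'.2 (i + 1) (j + 1)) → G.hg n k ι = G.hg n k ι')

/-- The family of vectors `x₀, ∇f(x₀), ∇f(x₁), …` generating the previsible vector spaces of
evaluation points. -/
def gsVecs {N : ℕ} (f : EucSp N → ℝ) (x : ℕ → EucSp N) : ℕ → EucSp N
  | 0 => x 0
  | k + 1 => gradient f (x k)

/-- `d_n`: the dimension of the previsible vector space of evaluation points
`V_n = span{x₀, ∇f(x_k) : k < n}`. -/
def dimSpan {N : ℕ} (f : EucSp N → ℝ) (x : ℕ → EucSp N) (n : ℕ) : ℕ :=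
  Module.finrank ℝ (Submodule.span ℝ (gsVecs f x '' Set.Iic n))

/-- The modified information vector `Î_n`: function values along the path together with
the inner products of the Gram–Schmidt orthonormal coordinate system with the gradients
(truncated to the relevant range). -/
def minfoAt {N : ℕ} (f : EucSp N → ℝ) (x : ℕ → EucSp N) (n : ℕ) : InfoVec :=
  (fun k => if k ≤ n then f (x k) else 0,
   fun i k => if i < n + 2 ∧ k ≤ n then
      ⟪InnerProductSpace.gramSchmidtNormed ℝ (gsVecs f x) i, gradient f (x k)⟫_ℝ else 0)

/-- Strict positive definiteness of `(f, ∇f, (∂_{ij}f)_{i≤j}, …)` up to order `k`: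
coefficients are indexed by points, by the order `l ≤ k` of differentiation and by sorted
(monotone) index tuples `i₁ ≤ … ≤ i_l`. -/
def StrictPosDefDerivs {Ω : Type*} [MeasurableSpace Ω] (P : Measure Ω) {N : ℕ}
    (f : Ω → EucSp N → ℝ) (k : ℕ) : Prop :=
  ∀ (n : ℕ) (x : Fin n → EucSp N), Function.Injective x →
    ∀ w : (j : Fin n) → (l : Fin (k + 1)) → ((Fin (l : ℕ) → Fin N) → ℝ),
      (∀ j l idx, ¬ Monotone idx → w j l idx = 0) →
      variance (fun ω => ∑ j, ∑ l : Fin (k + 1), ∑ idx : Fin (l : ℕ) → Fin N,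
        w j l idx *
          iteratedFDeriv ℝ (l : ℕ) (f ω) (x j) (fun s => EuclideanSpace.single (idx s) 1)) P
        = 0 →
      ∀ j l idx, w j l idx = 0

end

/-! For `φ = U · + b`, the chain rule and Riesz duality give `∇(f ∘ φ)(y) = Uᵀ ∇f(φ y)`, and `Uᵀ`
preserves inner products. Hence every inner product among gradients is unchanged; when `b = 0`
also `y₀ = Uᵀ x₀`, so the inner products involving `x₀` are unchanged as well. -/

open InnerProductSpace in
theorem LinearIsometryEquiv.gradient_comp {E F : Type*} [NormedAddCommGroup E]
    [InnerProductSpace ℝ E] [CompleteSpace E] [NormedAddCommGroup F] [InnerProductSpace ℝ F]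
    [CompleteSpace F] (φ : E ≃ₗᵢ[ℝ] F) (f : F → ℝ) (y : E) :
    gradient (f ∘ φ) y = φ.symm (gradient f (φ y)) := by
  apply (toDual ℝ E).symm.symm.injective
  ext v
  rw [gradient, gradient, LinearIsometryEquiv.symm_symm, LinearIsometryEquiv.apply_symm_apply,
    toDual_apply_apply, ← φ.inner_map_map, φ.apply_symm_apply, toDual_symm_apply]
  exact congrArg (· v) (φ.toContinuousLinearEquiv.comp_right_fderiv (f := f) (x := y))

theorem gradient_comp_add_right {E : Type*} [NormedAddCommGroup E]
    [InnerProductSpace ℝ E] [CompleteSpace E] (f : E → ℝ) (a y : E) :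
    gradient (fun z => f (z + a)) y = gradient f (y + a) := by
  rw [gradient, gradient, fderiv_comp_add_right]

theorem AffineIsometryEquiv.gradient_comp {E F : Type*} [NormedAddCommGroup E]
    [InnerProductSpace ℝ E] [CompleteSpace E] [NormedAddCommGroup F] [InnerProductSpace ℝ F]
    [CompleteSpace F] (φ : E ≃ᵃⁱ[ℝ] F) (f : F → ℝ) (y : E) :
    gradient (f ∘ φ) y = φ.linearIsometryEquiv.symm (gradient f (φ y)) := by
  have hφ (z : E) : φ z = φ.linearIsometryEquiv z + φ 0 := by
    simpa using φ.map_vadd 0 z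
  have hcomp : f ∘ φ = (fun z => f (z + φ 0)) ∘ φ.linearIsometryEquiv := by
    funext z
    simp [hφ z]
  rw [hcomp, LinearIsometryEquiv.gradient_comp, gradient_comp_add_right, ← hφ]

theorem information_comp_linearIsometryEquiv {N : ℕ} (f : EucSp N → ℝ)
    (φ : EucSp N ≃ₗᵢ[ℝ] EucSp N) (x : ℕ → EucSp N) (n : ℕ) :
    information (f ∘ φ) (fun k => φ.symm (x k)) n = information f x n := by
  have hgrad (k : ℕ) : gradient (f ∘ φ) (φ.symm (x k)) = φ.symm (gradient f (x k)) := by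
    rw [φ.gradient_comp, φ.apply_symm_apply]
  simp only [information, Function.comp_apply, φ.apply_symm_apply, hgrad]
  congr
  funext i j
  split_ifs <;> simp [LinearIsometryEquiv.inner_map_map]

theorem redInformation_comp_affineIsometryEquiv {N : ℕ} (f : EucSp N → ℝ)
    (φ : EucSp N ≃ᵃⁱ[ℝ] EucSp N) (x : ℕ → EucSp N) (n : ℕ) :
    redInformation (f ∘ φ) (fun k => φ.symm (x k)) n = redInformation f x n := by
  simp only [redInformation, Function.comp_apply, φ.apply_symm_apply, φ.gradient_comp,
    LinearIsometryEquiv.inner_map_map]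

theorem information_invariant_under_isometries_general
    {N : ℕ} (f : EucSp N → ℝ)
    (x : ℕ → EucSp N) (n : ℕ) :
    (∀ φ : EucSp N ≃ₗᵢ[ℝ] EucSp N,
      information f x n = information (f ∘ φ) (fun k => φ.symm (x k)) n) ∧
    (∀ φ : EucSp N ≃ᵃⁱ[ℝ] EucSp N,
      redInformation f x n = redInformation (f ∘ φ) (fun k => φ.symm (x k)) n) :=
  ⟨fun φ => (information_comp_linearIsometryEquiv f φ x n).symm,
    fun φ => (redInformation_comp_affineIsometryEquiv f φ x n).symm⟩

/-- Lemma: the information is invariant under linear isometries.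
For differentiable `f`, points `x₀, …, x_n`, a linear isometry `φ`, `g := f ∘ φ` and
`y_k := φ⁻¹(x_k)`, the information vectors of `(f, x)` and `(g, y)` coincide exactly.
For a general (affine) isometry `φ(x) = Ux + b` the reduced information vectors coincide. -/
theorem information_invariant_under_isometries
    {N : ℕ} (f : EucSp N → ℝ) (hf : Differentiable ℝ f)
    (x : ℕ → EucSp N) (n : ℕ) :
    (∀ φ : EucSp N ≃ₗᵢ[ℝ] EucSp N,
      information f x n = information (f ∘ φ) (fun k => φ.symm (x k)) n) ∧
    (∀ φ : EucSp N ≃ᵃⁱ[ℝ] EucSp N,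
      redInformation f x n = redInformation (f ∘ φ) (fun k => φ.symm (x k)) n) :=
  information_invariant_under_isometries_general f x n
end

section
/- Simple previsible sampling: let f be an almost surely continuous random function from ℝ^N to ℝ^m, let X be an ℝ^N-valued random variable measurable with respect to a sub-σ-algebra 𝓕, and let h be a bounded measurable function. Then E[h(f(X)) | 𝓕] = ( y ↦ E[h(f(y)) | 𝓕] )(X) almost surely. -/
open MeasureTheory ProbabilityTheory Filter
open scoped ENNReal NNReal InnerProductSpace Topology BigOperators

noncomputable section PrevisibleAux
open MeasureTheory ProbabilityTheory Filter TopologicalSpace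
open scoped Classical

namespace PrevisibleAux

variable {N d : ℕ}

/-- A dense sequence in `EucSp N`. -/
def e (N : ℕ) : ℕ → EucSp N := TopologicalSpace.denseSeq (EucSp N)

lemma exists_close (x : EucSp N) (n : ℕ) : ∃ k, dist (e N k) x < 1 / (n + 1 : ℝ) := by
  have hr : (0:ℝ) < 1 / (n + 1 : ℝ) := by positivity
  obtain ⟨k, hk⟩ :=
    Metric.denseRange_iff.mp (TopologicalSpace.denseRange_denseSeq (EucSp N)) x _ hr
  exact ⟨k, by rwa [dist_comm]⟩

/-- Index of an element of the dense sequence close to `x`. -/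
def kk (x : EucSp N) (n : ℕ) : ℕ := Nat.find (exists_close x n)

lemma kk_spec (x : EucSp N) (n : ℕ) : dist (e N (kk x n)) x < 1 / (n + 1 : ℝ) :=
  Nat.find_spec (exists_close x n)

lemma measurable_kk (n : ℕ) : Measurable fun x : EucSp N => kk x n :=
  measurable_find (fun x => exists_close x n) fun k =>
    measurableSet_lt (measurable_const.dist measurable_id) measurable_const

lemma tendsto_e_kk (x : EucSp N) : Tendsto (fun n => e N (kk x n)) atTop (𝓝 x) := by
  rw [tendsto_iff_dist_tendsto_zero]
  exact squeeze_zero (fun n => dist_nonneg) (fun n => (kk_spec x n).le)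
    tendsto_one_div_add_atTop_nhds_zero_nat

/-- The space of sequences in `EucSp d`. -/
abbrev SeqSp (d : ℕ) : Type := ℕ → EucSp d

def gg (N d : ℕ) (n : ℕ) (p : EucSp N × SeqSp d) : EucSp d := p.2 (kk p.1 n)

lemma measurable_gg (n : ℕ) : Measurable (gg N d n) := by
  have h1 : Measurable fun q : SeqSp d × ℕ => q.1 q.2 :=
    measurable_from_prod_countable_left fun m => measurable_pi_apply m
  exact h1.comp (measurable_snd.prodMk ((measurable_kk n).comp measurable_fst))

/-- The set where the approximating sequence is Cauchy. -/
def CC (N d : ℕ) : Set (EucSp N × SeqSp d) := {p | CauchySeq fun n => gg N d n p}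

lemma CC_eq : CC N d = ⋂ j : ℕ, ⋃ n₀ : ℕ, ⋂ n : ℕ,
    ({p | dist (gg N d n p) (gg N d n₀ p) < 1 / (j + 1 : ℝ)} ∪
      {_p : EucSp N × SeqSp d | ¬ n₀ ≤ n}) := by
  ext p
  simp only [CC, Set.mem_setOf_eq, Set.mem_iInter, Set.mem_iUnion, Set.mem_union]
  constructor
  · intro hp j
    obtain ⟨n₀, hn₀⟩ := Metric.cauchySeq_iff'.mp hp (1 / (j + 1 : ℝ)) (by positivity)
    exact ⟨n₀, fun n => by
      by_cases hn : n₀ ≤ n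
      · exact Or.inl (hn₀ n hn)
      · exact Or.inr hn⟩
  · intro hp
    rw [Metric.cauchySeq_iff']
    intro ε hε
    obtain ⟨j, hj⟩ := exists_nat_one_div_lt hε
    obtain ⟨n₀, hn₀⟩ := hp j
    exact ⟨n₀, fun n hn => ((hn₀ n).resolve_right (not_not_intro hn)).trans hj⟩

lemma measurableSet_CC : MeasurableSet (CC N d) := by
  rw [CC_eq]
  refine MeasurableSet.iInter fun j => MeasurableSet.iUnion fun n₀ =>
    MeasurableSet.iInter fun n => ?_
  refine (measurableSet_lt ((measurable_gg n).dist (measurable_gg n₀)) measurable_const).union ?_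
  by_cases hn : n₀ ≤ n
  · simp only [hn, not_true_eq_false, Set.setOf_false]
    exact MeasurableSet.empty
  · simp only [hn, not_false_eq_true, Set.setOf_true]
    exact MeasurableSet.univ

def ggm (N d : ℕ) (n : ℕ) : EucSp N × SeqSp d → EucSp d := (CC N d).piecewise (gg N d n) 0

lemma measurable_ggm (n : ℕ) : Measurable (ggm N d n) :=
  Measurable.piecewise measurableSet_CC (measurable_gg n) measurable_const

lemma exists_lim (p : EucSp N × SeqSp d) : ∃ L, Tendsto (fun n => ggm N d n p) atTop (𝓝 L) := by
  by_cases hp : p ∈ CC N d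
  · obtain ⟨L, hL⟩ := cauchySeq_tendsto_of_complete hp
    refine ⟨L, ?_⟩
    have : (fun n => ggm N d n p) = fun n => gg N d n p := by
      funext n; exact Set.piecewise_eq_of_mem _ _ _ hp
    rw [this]; exact hL
  · refine ⟨0, ?_⟩
    have : (fun n => ggm N d n p) = fun _ => (0 : EucSp d) := by
      funext n; exact Set.piecewise_eq_of_notMem _ _ _ hp
    rw [this]; exact tendsto_const_nhds

/-- The reconstruction map: from a point `x` and a sequence of values on the dense sequence,
recover the value at `x` (for sequences coming from continuous functions). -/
def G (N d : ℕ) : EucSp N × SeqSp d → EucSp d := fun p => (exists_lim p).choose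

lemma tendsto_G (p : EucSp N × SeqSp d) :
    Tendsto (fun n => ggm N d n p) atTop (𝓝 (G N d p)) :=
  (exists_lim p).choose_spec

lemma measurable_G : Measurable (G N d) :=
  measurable_of_tendsto_metrizable' atTop measurable_ggm (tendsto_pi_nhds.mpr tendsto_G)

lemma G_eval {φ : EucSp N → EucSp d} (hφ : Continuous φ) (x : EucSp N) :
    G N d (x, fun k => φ (e N k)) = φ x := by
  set p : EucSp N × SeqSp d := (x, fun k => φ (e N k)) with hpdef
  have h1 : Tendsto (fun n => gg N d n p) atTop (𝓝 (φ x)) := by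
    have he : (fun n => gg N d n p) = fun n => φ (e N (kk x n)) := rfl
    rw [he]
    exact (hφ.tendsto x).comp (tendsto_e_kk x)
  have hC : p ∈ CC N d := h1.cauchySeq
  have h2 : (fun n => ggm N d n p) = fun n => gg N d n p := by
    funext n; exact Set.piecewise_eq_of_mem _ _ _ hC
  exact tendsto_nhds_unique (tendsto_G p) (by rw [h2]; exact h1)

/-- Auxiliary: joint measurability of a parametrized integral against a kernel. -/
theorem measurable_kernel_param_integral {A B S : Type*}
    [MeasurableSpace A] [MeasurableSpace B] [MeasurableSpace S]
    (κ : ProbabilityTheory.Kernel B S) [ProbabilityTheory.IsSFiniteKernel κ]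
    {F : A × S → ℝ} (hF : StronglyMeasurable F) :
    Measurable fun p : A × B => ∫ u, F (p.1, u) ∂κ p.2 := by
  have hsnd : Measurable fun p : A × B => p.2 := measurable_snd
  have hFm : StronglyMeasurable fun q : (A × B) × S => F (q.1.1, q.2) :=
    hF.comp_measurable ((measurable_fst.comp measurable_fst).prodMk measurable_snd)
  have := hFm.integral_kernel_prod_right' (κ := κ.comap Prod.snd hsnd)
  have heq : (fun p : A × B => ∫ u, F (p.1, u) ∂(κ.comap Prod.snd hsnd) p) =
      fun p : A × B => ∫ u, F (p.1, u) ∂κ p.2 := by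
    funext p; rw [ProbabilityTheory.Kernel.comap_apply]
  rw [heq] at this
  exact this.measurable

end PrevisibleAux

end PrevisibleAux


/-- Auxiliary version of simple previsible sampling, with the ambient σ-algebra declared
after the sub-σ-algebra so that instance resolution prefers it. -/
theorem sps_aux {Ω : Type} (𝓕 : MeasurableSpace Ω) [mΩ : MeasurableSpace Ω]
    (P : Measure Ω) [IsProbabilityMeasure P] {N d : ℕ}
    (f : Ω → EucSp N → EucSp d)
    (hle : 𝓕 ≤ mΩ)
    (X : Ω → EucSp N) (hX : @Measurable Ω (EucSp N) 𝓕 _ X)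
    (hfmeas : ∀ y, @Measurable Ω (EucSp d) mΩ _ fun ω => f ω y)
    (hcont : ∀ᵐ ω ∂P, Continuous (f ω))
    (h : EucSp d → ℝ) (hh : Measurable h) (M : ℝ) (hM : ∀ z, |h z| ≤ M) :
    ∃ Φ : EucSp N → Ω → ℝ,
      (@Measurable (EucSp N × Ω) ℝ (@Prod.instMeasurableSpace _ _ _ 𝓕) _
        fun p : EucSp N × Ω => Φ p.1 p.2) ∧
      (∀ y : EucSp N, Φ y =ᵐ[P] P[(fun ω => h (f ω y))|𝓕]) ∧
      ((fun ω => Φ (X ω) ω) =ᵐ[P] P[(fun ω => h (f ω (X ω)))|𝓕]) := by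
  classical
  -- correct `f` on a null set to get everywhere-continuity
  set Nset : Set Ω := toMeasurable P {ω | ¬ Continuous (f ω)} with hNdef
  have hNmeas : MeasurableSet Nset := measurableSet_toMeasurable _ _
  have hN0 : P Nset = 0 := by
    rw [hNdef, measure_toMeasurable]
    simpa [ae_iff] using hcont
  set f' : Ω → EucSp N → EucSp d := fun ω => if ω ∈ Nset then 0 else f ω with hf'def
  have hf'cont : ∀ ω, Continuous (f' ω) := by
    intro ω
    by_cases hω : ω ∈ Nset
    · simp only [hf'def, hω, if_true]
      exact continuous_const
    · simp only [hf'def, hω, if_false]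
      by_contra hc
      exact hω (subset_toMeasurable _ _ hc)
  have hf'meas : ∀ y, Measurable fun ω => f' ω y := by
    intro y
    have he : (fun ω => f' ω y) = fun ω => if ω ∈ Nset then 0 else f ω y := by
      funext ω; by_cases hω : ω ∈ Nset <;> simp [hf'def, hω]
    rw [he]
    exact Measurable.ite hNmeas measurable_const (hfmeas y)
  have hf'ae : ∀ᵐ ω ∂P, f' ω = f ω := by
    have hmem : ∀ᵐ ω ∂P, ω ∉ Nset := by
      rw [ae_iff]
      simpa [not_not] using hN0
    filter_upwards [hmem] with ω hω
    simp [hf'def, hω]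
  -- the sequence of values on the dense set
  set Y : Ω → PrevisibleAux.SeqSp d := fun ω k => f' ω (PrevisibleAux.e N k) with hYdef
  have hYmeas : Measurable Y := measurable_pi_lambda _ fun k => hf'meas _
  have hGY : ∀ ω y, PrevisibleAux.G N d (y, Y ω) = f' ω y := fun ω y =>
    PrevisibleAux.G_eval (hf'cont ω) y
  -- the conditional distribution kernel
  have hid : @Measurable Ω Ω mΩ 𝓕 id := measurable_id'' hle
  set κ := @condDistrib Ω Ω (PrevisibleAux.SeqSp d) _ _ _ _ 𝓕 Y id P _ with hκdef
  refine ⟨fun y ω => ∫ u, h (PrevisibleAux.G N d (y, u)) ∂κ ω, ?_, ?_, ?_⟩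
  · -- joint measurability
    have hF : StronglyMeasurable fun q : EucSp N × PrevisibleAux.SeqSp d =>
        h (PrevisibleAux.G N d q) :=
      (hh.comp PrevisibleAux.measurable_G).stronglyMeasurable
    exact @PrevisibleAux.measurable_kernel_param_integral (EucSp N) Ω
      (PrevisibleAux.SeqSp d) _ 𝓕 _ κ _ _ hF
  · -- pointwise identification
    intro y
    have hsm : StronglyMeasurable fun u : PrevisibleAux.SeqSp d =>
        h (PrevisibleAux.G N d (y, u)) :=
      (hh.comp (PrevisibleAux.measurable_G.comp
        (measurable_const.prodMk measurable_id))).stronglyMeasurable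
    have hint : Integrable (fun ω => h (PrevisibleAux.G N d (y, Y ω))) P := by
      refine Integrable.mono' (integrable_const M)
        ((hh.comp (PrevisibleAux.measurable_G.comp
          (measurable_const.prodMk hYmeas))).aestronglyMeasurable) ?_
      exact Filter.Eventually.of_forall fun ω => by
        simpa [Real.norm_eq_abs] using hM _
    have key := condExp_ae_eq_integral_condDistrib (μ := P) (X := (id : Ω → Ω)) (mβ := 𝓕)
      (Y := Y) hid hYmeas.aemeasurable hsm hint
    rw [MeasurableSpace.comap_id] at key
    have haeeq : (fun ω => h (PrevisibleAux.G N d (y, Y ω))) =ᵐ[P]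
        fun ω => h (f ω y) := by
      filter_upwards [hf'ae] with ω hω
      rw [hGY ω y, hω]
    exact key.symm.trans (condExp_congr_ae haeeq)
  · -- composition with X
    set F : Ω × PrevisibleAux.SeqSp d → ℝ := fun q => h (PrevisibleAux.G N d (X q.1, q.2))
      with hFdef
    have hFsm : @StronglyMeasurable _ _ _ (@Prod.instMeasurableSpace Ω _ 𝓕 _) F := by
      refine Measurable.stronglyMeasurable ?_
      refine hh.comp (PrevisibleAux.measurable_G.comp (Measurable.prodMk ?_ ?_))
      · exact hX.comp measurable_fst
      · exact measurable_snd
    have hint : Integrable (fun a => F (id a, Y a)) P := by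
      refine Integrable.mono' (integrable_const M)
        ((hh.comp (PrevisibleAux.measurable_G.comp
          ((hX.mono hle le_rfl).prodMk hYmeas))).aestronglyMeasurable) ?_
      exact Filter.Eventually.of_forall fun ω => by
        simpa [Real.norm_eq_abs] using hM _
    have key := condExp_prod_ae_eq_integral_condDistrib (μ := P) (X := (id : Ω → Ω))
      (mβ := 𝓕) (Y := Y) hid hYmeas.aemeasurable hFsm hint
    rw [MeasurableSpace.comap_id] at key
    have haeeq : (fun a => F (id a, Y a)) =ᵐ[P] fun ω => h (f ω (X ω)) := by
      filter_upwards [hf'ae] with ω hω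
      simp only [hFdef, id_eq]
      rw [hGY ω (X ω), hω]
    exact key.symm.trans (condExp_congr_ae haeeq)

/-- Corollary: simple previsible sampling.
For an a.s. continuous random function `f` from `ℝ^N` to `ℝ^d`, an `𝓕`-measurable random
point `X` and a bounded measurable `h`:
`E[h(f(X)) | 𝓕] = (y ↦ E[h(f(y)) | 𝓕])(X)` almost surely. -/
theorem simple_previsible_sampling
    {Ω : Type} (𝓕 : MeasurableSpace Ω) [MeasurableSpace Ω] (P : Measure Ω) [IsProbabilityMeasure P]
    {N d : ℕ}
    (f : Ω → EucSp N → EucSp d)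
    (h𝓕 : 𝓕 ≤ ‹MeasurableSpace Ω›)
    (X : Ω → EucSp N)
    (hX : @Measurable Ω (EucSp N) 𝓕 _ X)
    (hfmeas : ∀ y, Measurable fun ω => f ω y)
    (hfXmeas : Measurable fun ω => f ω (X ω))
    (hcont : ∀ᵐ ω ∂P, Continuous (f ω))
    (h : EucSp d → ℝ) (hh : Measurable h)
    (hbdd : ∃ M : ℝ, ∀ z, |h z| ≤ M) :
    ∃ Φ : EucSp N → Ω → ℝ,
      Measurable (fun p : EucSp N × Ω => Φ p.1 p.2) ∧
      (∀ y : EucSp N, Φ y =ᵐ[P] P[(fun ω => h (f ω y))|𝓕]) ∧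
      ((fun ω => Φ (X ω) ω) =ᵐ[P] P[(fun ω => h (f ω (X ω)))|𝓕]) := by
  obtain ⟨M, hM⟩ := hbdd
  rename_i mΩinst hPinst
  by_cases hle : 𝓕 ≤ mΩinst
  · obtain ⟨Φ, h1, h2, h3⟩ := sps_aux (mΩ := mΩinst) 𝓕 P f hle X hX hfmeas hcont h hh M hM
    exact ⟨Φ, h1.mono (sup_le_sup_left (MeasurableSpace.comap_mono hle) _) le_rfl, h2, h3⟩
  · refine ⟨fun _ _ => (0 : ℝ), measurable_const, ?_, ?_⟩
    · intro y
      rw [condExp_of_not_le hle]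
      exact Filter.EventuallyEq.of_eq rfl
    · rw [condExp_of_not_le hle]
      exact Filter.EventuallyEq.of_eq rfl
end
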